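/- Curry's n-ary multiple fixed-point combinators are multiple fixed-point combinators: for every n ≥ 1, every 1 ≤ k ≤ n, and all λ-terms F_1,…,F_n, (Φ_k^n F_1 ⋯ F_n) =βη (F_k (Φ_1^n F_1 ⋯ F_n) ⋯ (Φ_n^n F_1 ⋯ F_n)). -/

import Mathlib

namespace LC

/-- Untyped λ-terms, de Bruijn indices. -/
inductive Tm : Type
  | var : ℕ → Tm
  | app : Tm → Tm → Tm
  | lam : Tm → Tm
  deriving DecidableEq

namespace Tm

/-- Shift the free variables ≥ c up by one. -/
def lift (c : ℕ) : Tm → Tm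
  | var n => if n < c then var n else var (n + 1)
  | app a b => app (lift c a) (lift c b)
  | lam a => lam (lift (c + 1) a)

/-- Substitute `s` for the free variable `k`. -/
def subst (k : ℕ) (s : Tm) : Tm → Tm
  | var n => if n = k then s else if k < n then var (n - 1) else var n
  | app a b => app (subst k s a) (subst k s b)
  | lam a => lam (subst (k + 1) (lift 0 s) a)

/-- One-step βη-reduction (with congruence closure). -/
inductive Step : Tm → Tm → Prop
  | beta (a b : Tm) : Step (app (lam a) b) (subst 0 b a)
  | eta (a : Tm) : Step (lam (app (lift 0 a) (var 0))) a
  | appL {a a' : Tm} (b : Tm) : Step a a' → Step (app a b) (app a' b)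
  | appR (a : Tm) {b b' : Tm} : Step b b' → Step (app a b) (app a b')
  | lamCongr {a a' : Tm} : Step a a' → Step (lam a) (lam a')

/-- βη-equivalence: the equivalence relation generated by βη-reduction. -/
def BetaEta : Tm → Tm → Prop := Relation.EqvGen Step

/-- Multi-step βη-reduction: reflexive-transitive closure of βη-reduction. -/
def Reduces : Tm → Tm → Prop := Relation.ReflTransGen Step

/-- I = λx.x -/
def I : Tm := lam (var 0)
/-- K = λxy.x -/
def K : Tm := lam (lam (var 1))
/-- B = λxyz.(x (y z)) -/
def B : Tm := lam (lam (lam (app (var 2) (app (var 1) (var 0)))))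
/-- C = λxyz.(x z y) -/
def C : Tm := lam (lam (lam (app (app (var 2) (var 0)) (var 1))))
/-- S = λxyz.(x z (y z)) -/
def S : Tm := lam (lam (lam (app (app (var 2) (var 0)) (app (var 1) (var 0)))))

/-- body of the n-th Church numeral: s (s ⋯ (s z)⋯), n times. -/
def churchBody : ℕ → Tm
  | 0 => var 0
  | n + 1 => app (var 1) (churchBody n)

/-- The n-th Church numeral c_n = λsz.(s (s ⋯ (s z)⋯)). -/
def church (n : ℕ) : Tm := lam (lam (churchBody n))

/-- n nested λ-abstractions. -/
def lamN : ℕ → Tm → Tm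
  | 0, t => t
  | n + 1, t => lam (lamN n t)

/-- Shift all free variables up by n. -/
def liftN (n : ℕ) (t : Tm) : Tm := (lift 0)^[n] t

/-- t (var (a+k-1)) ⋯ (var (a+1)) (var a) : left-associated application of t
to k variables with descending indices. -/
def appVars (t : Tm) (a k : ℕ) : Tm :=
  ((List.range k).reverse).foldl (fun s i => app s (var (a + i))) t

/-- t (var a) (var (a+1)) ⋯ (var (a+k-1)) : left-associated application of t
to k variables with ascending indices. -/
def appVarsAsc (t : Tm) (a k : ℕ) : Tm :=
  (List.range k).foldl (fun s i => app s (var (a + i))) t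

/-- Left-associated application of t to a list of terms. -/
def appList (t : Tm) (l : List Tm) : Tm := l.foldl app t

/-- K_n = λp x_1…x_n. p -/
def Kn (n : ℕ) : Tm := lamN (n + 1) (var n)
/-- S_n = λpq x_1…x_n.(p x_1⋯x_n (q x_1⋯x_n)) -/
def Sn (n : ℕ) : Tm :=
  lamN (n + 2) (app (appVars (var (n + 1)) 0 n) (appVars (var n) 0 n))
/-- B_n = λpq x_1…x_n.(p (q x_1⋯x_n)) -/
def Bn (n : ℕ) : Tm := lamN (n + 2) (app (var (n + 1)) (appVars (var n) 0 n))
/-- C_n = λpq x_1…x_n.(p x_1⋯x_n q) -/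
def Cn (n : ℕ) : Tm := lamN (n + 2) (app (appVars (var (n + 1)) 0 n) (var n))


/-- W_j = λx_1…x_n.(f_j (x_1 x_1 ⋯ x_n) ⋯ (x_n x_1 ⋯ x_n)); here f_j is the
variable of index 2n - j, bound by the surrounding λf_1…f_n. -/
def W (n j : ℕ) : Tm :=
  lamN n (((List.range n).reverse).foldl
    (fun s i => app s (appVars (var i) 0 n)) (var (2 * n - j)))

/-- Curry's n-ary multiple fixed-point combinator Φ_k^n = λf_1…f_n.(W_k W_1 ⋯ W_n). -/
def Phi (n k : ℕ) : Tm :=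
  lamN n (appList (W n k) ((List.range n).map fun i => W n (i + 1)))

/-!
Let W'_j be W_j with F_1, …, F_n substituted for f_1, …, f_n. Then Φ_j^n F_1 ⋯ F_n →β W'_j W'_1 ⋯ W'_n,
and since W'_j feeds F_j the self-applications x_i x_1 ⋯ x_n of its arguments,
W'_j W'_1 ⋯ W'_n →β F_j (W'_1 W'_1 ⋯ W'_n) ⋯ (W'_n W'_1 ⋯ W'_n).
So both sides of the equation β-reduce to F_k (W'_1 W'_1 ⋯ W'_n) ⋯ (W'_n W'_1 ⋯ W'_n).
-/

@[simp] lemma liftN_zero (t : Tm) : liftN 0 t = t := rfl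

lemma liftN_succ (m : ℕ) (t : Tm) : liftN (m + 1) t = lift 0 (liftN m t) :=
  Function.iterate_succ_apply' _ _ _

lemma liftN_add (a b : ℕ) (t : Tm) : liftN (a + b) t = liftN a (liftN b t) :=
  Function.iterate_add_apply _ _ _ _

lemma lift_succ_lift {c d : ℕ} (h : d ≤ c) (t : Tm) :
    lift (c + 1) (lift d t) = lift d (lift c t) := by
  induction t generalizing c d with
  | var n =>
      simp only [lift]
      split_ifs <;> simp only [lift] <;> split_ifs <;> first | rfl | omega
  | app a b iha ihb => simp only [lift, iha h, ihb h]
  | lam a ih => simp only [lift, ih (Nat.succ_le_succ h)]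

lemma liftN_lift_zero (k : ℕ) (t : Tm) : liftN k (lift 0 t) = lift k (liftN k t) := by
  induction k with
  | zero => rfl
  | succ k ih => rw [liftN_succ, ih, liftN_succ, lift_succ_lift k.zero_le]

lemma subst_lift (c : ℕ) (s t : Tm) : subst c s (lift c t) = t := by
  induction t generalizing c s with
  | var n =>
      simp only [lift]
      split_ifs <;> simp only [subst] <;> split_ifs <;> first | rfl | omega
  | app a b iha ihb => simp only [lift, subst, iha, ihb]
  | lam a ih => simp only [lift, subst, ih]

lemma subst_liftN {k m : ℕ} (h : k < m) (s t : Tm) :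
    subst k s (liftN m t) = liftN (m - 1) t := by
  obtain ⟨p, rfl⟩ : ∃ p, m = k + (p + 1) := ⟨m - 1 - k, by omega⟩
  rw [liftN_add, liftN_succ, liftN_lift_zero, subst_lift, ← liftN_add]
  congr 1

lemma subst_lamN (m k : ℕ) (s t : Tm) :
    subst k s (lamN m t) = lamN m (subst (k + m) (liftN m s) t) := by
  induction m generalizing k s with
  | zero => rfl
  | succ m ih =>
      show lam (subst (k + 1) (lift 0 s) (lamN m t)) = lam (lamN m _)
      rw [ih, Nat.add_right_comm, Nat.add_assoc]
      rfl

/-- The result of β-reducing `lamN L.length t` against the arguments `L`, seen under `d` further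
binders: the `i`-th element of `L` replaces the variable `d + L.length - 1 - i`. -/
def substList (d : ℕ) : Tm → List Tm → Tm
  | t, [] => t
  | t, a :: L => substList d (subst (d + L.length) (liftN (d + L.length) a) t) L

lemma substList_app (d : ℕ) (a b : Tm) (L : List Tm) :
    substList d (app a b) L = app (substList d a L) (substList d b L) := by
  induction L generalizing a b with
  | nil => rfl
  | cons x L ih => simp only [substList, subst, ih]

lemma substList_appList (d : ℕ) (t : Tm) (l L : List Tm) :
    substList d (appList t l) L = appList (substList d t L) (l.map (substList d · L)) := by
  induction l generalizing t with
  | nil => rfl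
  | cons x l ih => exact (ih (app t x)).trans (by rw [substList_app]; rfl)

lemma substList_lamN (d m : ℕ) (t : Tm) (L : List Tm) :
    substList d (lamN m t) L = lamN m (substList (d + m) t L) := by
  induction L generalizing t with
  | nil => rfl
  | cons a L ih =>
      rw [substList, subst_lamN, ih, ← liftN_add, Nat.add_comm m, Nat.add_right_comm d L.length m,
        substList]

lemma substList_liftN (d : ℕ) (t : Tm) {L : List Tm} {M : ℕ} (h : d + L.length ≤ M) :
    substList d (liftN M t) L = liftN (M - L.length) t := by
  induction L generalizing M with
  | nil => rfl
  | cons a L ih =>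
      rw [List.length_cons] at h
      rw [substList, subst_liftN (by omega), ih (by omega), List.length_cons, Nat.sub_sub,
        Nat.add_comm 1]

lemma substList_var_of_lt {d i : ℕ} (h : i < d) (L : List Tm) :
    substList d (var i) L = var i := by
  induction L with
  | nil => rfl
  | cons a L ih => rw [substList, subst, if_neg (by omega), if_neg (by omega), ih]

lemma substList_var_add (d : ℕ) {m i : ℕ} (g : ℕ → Tm) (hi : i < m) :
    substList d (var (d + i)) ((List.range m).map g) = liftN d (g (m - 1 - i)) := by
  induction m generalizing g with
  | zero => omega
  | succ m ih =>
      rw [List.range_succ_eq_map, List.map_cons, List.map_map, substList, List.length_map,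
        List.length_range]
      rcases (Nat.lt_succ_iff.1 hi).eq_or_lt with rfl | hlt
      · rw [subst, if_pos rfl, substList_liftN d _ (by simp), List.length_map, List.length_range,
          Nat.add_sub_cancel, Nat.add_sub_cancel, Nat.sub_self]
      · rw [subst, if_neg (by omega), if_neg (by omega), ih _ hlt, Function.comp_apply]
        congr 2
        omega

lemma Reduces.app_left {a a' : Tm} (b : Tm) (h : Reduces a a') : Reduces (app a b) (app a' b) :=
  Relation.ReflTransGen.lift (app · b) (fun _ _ => Step.appL b) _ _ h

lemma Reduces.app_right (a : Tm) {b b' : Tm} (h : Reduces b b') : Reduces (app a b) (app a b') :=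
  Relation.ReflTransGen.lift (app a) (fun _ _ => Step.appR a) _ _ h

lemma Reduces.appList {t t' : Tm} {L L' : List Tm} (h : Reduces t t')
    (hL : List.Forall₂ Reduces L L') : Reduces (appList t L) (appList t' L') := by
  induction hL generalizing t t' with
  | nil => exact h
  | cons hx _ ih => exact ih ((h.app_left _).trans (Reduces.app_right _ hx))

lemma BetaEta.of_common_reduct {a b c : Tm} (ha : Reduces a c) (hb : Reduces b c) :
    BetaEta a b :=
  .trans _ _ _ (Relation.EqvGen.reflTransGen_le_eqvGen _ _ _ ha)
    (.symm _ _ (Relation.EqvGen.reflTransGen_le_eqvGen _ _ _ hb))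

lemma reduces_appList_lamN (L : List Tm) (t : Tm) :
    Reduces (appList (lamN L.length t) L) (substList 0 t L) := by
  induction L generalizing t with
  | nil => exact .refl
  | cons a L ih =>
      have hβ : Step (app (lam (lamN L.length t)) a)
          (lamN L.length (subst (0 + L.length) (liftN (0 + L.length) a) t)) := by
        simpa only [subst_lamN, Nat.zero_add] using Step.beta (lamN L.length t) a
      exact (Reduces.appList (.single hβ) (List.forall₂_same.2 fun _ _ => .refl)).trans (ih _)

lemma appList_map {α : Type*} (t : Tm) (l : List α) (f : α → Tm) :
    appList t (l.map f) = l.foldl (fun s i => app s (f i)) t :=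
  List.foldl_map ..

lemma appVars_eq_appList (t : Tm) (a k : ℕ) :
    appVars t a k = appList t ((List.range k).reverse.map fun i => var (a + i)) :=
  (appList_map ..).symm

lemma map_reverse_range {α : Type*} (f : ℕ → α) (n : ℕ) :
    (List.range n).reverse.map f = (List.range n).map fun i => f (n - 1 - i) := by
  conv_lhs => rw [List.range_eq_range', List.reverse_range', List.map_map]
  simp only [Function.comp_def, Nat.zero_add]

def args (F : ℕ → Tm) (n : ℕ) : List Tm := (List.range n).map fun i => F (i + 1)

@[simp] lemma length_args (F : ℕ → Tm) (n : ℕ) : (args F n).length = n := by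
  simp [args]

lemma substList_args_var_add (d : ℕ) (F : ℕ → Tm) {n i : ℕ} (hi : i < n) :
    substList d (var (d + i)) (args F n) = liftN d (F (n - i)) := by
  rw [args, substList_var_add d _ hi]
  congr 2
  omega

lemma substList_args_var (F : ℕ → Tm) {n i : ℕ} (hi : i < n) :
    substList 0 (var i) (args F n) = F (n - i) := by
  simpa using substList_args_var_add 0 F hi

lemma substList_appVars (t : Tm) (F : ℕ → Tm) (n : ℕ) :
    substList 0 (appVars t 0 n) (args F n) = appList (substList 0 t (args F n)) (args F n) := by
  rw [appVars_eq_appList, substList_appList, List.map_map, map_reverse_range]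
  congr 1
  refine List.map_congr_left fun i hi => ?_
  rw [List.mem_range] at hi
  rw [Function.comp_apply, substList_args_var_add 0 F (by omega), liftN_zero]
  congr 1
  omega

lemma substList_appVars_of_lt {d i k : ℕ} (hi : i < d) (hk : k ≤ d) (L : List Tm) :
    substList d (appVars (var i) 0 k) L = appVars (var i) 0 k := by
  rw [appVars_eq_appList, substList_appList, substList_var_of_lt hi, List.map_map]
  congr 1
  refine List.map_congr_left fun x hx => substList_var_of_lt ?_ L
  rw [List.mem_reverse, List.mem_range] at hx
  omega

/-- `x_1 x_1 ⋯ x_n, …, x_n x_1 ⋯ x_n`, where `x_i` is the variable `n - i`. -/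
def selfApps (n : ℕ) : List Tm := (List.range n).reverse.map fun i => appVars (var i) 0 n

lemma W_eq (n j : ℕ) : W n j = lamN n (appList (var (2 * n - j)) (selfApps n)) :=
  congrArg (lamN n) (appList_map ..).symm

lemma map_substList_selfApps_of_le {d n : ℕ} (h : n ≤ d) (L : List Tm) :
    (selfApps n).map (substList d · L) = selfApps n := by
  rw [selfApps, List.map_map]
  refine List.map_congr_left fun i hi => substList_appVars_of_lt ?_ h L
  rw [List.mem_reverse, List.mem_range] at hi
  omega

lemma map_substList_selfApps (F : ℕ → Tm) (n : ℕ) :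
    (selfApps n).map (substList 0 · (args F n)) = args (fun j => appList (F j) (args F n)) n := by
  rw [selfApps, List.map_map, map_reverse_range]
  refine List.map_congr_left fun i hi => ?_
  rw [List.mem_range] at hi
  rw [Function.comp_apply, substList_appVars, substList_args_var F (by omega)]
  congr 2
  omega

/-- `W'_j`: `W_j` with `F_1, …, F_n` substituted for `f_1, …, f_n`. -/
def WOf (F : ℕ → Tm) (n j : ℕ) : Tm := lamN n (appList (liftN n (F j)) (selfApps n))

lemma substList_W (F : ℕ → Tm) {n j : ℕ} (hj : 1 ≤ j) (hjn : j ≤ n) :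
    substList 0 (W n j) (args F n) = WOf F n j := by
  rw [W_eq, substList_lamN, Nat.zero_add, substList_appList,
    show 2 * n - j = n + (n - j) by omega, substList_args_var_add n F (by omega),
    Nat.sub_sub_self hjn, map_substList_selfApps_of_le le_rfl, WOf]

lemma Phi_reduces (F : ℕ → Tm) {n j : ℕ} (hj : 1 ≤ j) (hjn : j ≤ n) :
    Reduces (appList (Phi n j) (args F n)) (appList (WOf F n j) (args (WOf F n) n)) := by
  have h := reduces_appList_lamN (args F n) (appList (W n j) (args (W n) n))
  have hW : (args (W n) n).map (substList 0 · (args F n)) = args (WOf F n) n := by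
    simp only [args, List.map_map]
    refine List.map_congr_left fun i hi => substList_W F (by omega) ?_
    rw [List.mem_range] at hi
    omega
  rwa [length_args, substList_appList, substList_W F hj hjn, hW] at h

lemma WOf_reduces (F : ℕ → Tm) (n k : ℕ) :
    Reduces (appList (WOf F n k) (args (WOf F n) n))
      (appList (F k) (args (fun j => appList (WOf F n j) (args (WOf F n) n)) n)) := by
  have h := reduces_appList_lamN (args (WOf F n) n) (appList (liftN n (F k)) (selfApps n))
  rwa [length_args, substList_appList, substList_liftN 0 _ (by simp), length_args, Nat.sub_self,
    map_substList_selfApps] at h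

theorem curry_multiple_fixed_points_general (n k : ℕ) (hk : 1 ≤ k)
    (hkn : k ≤ n) (F : ℕ → Tm) :
    BetaEta (appList (Phi n k) ((List.range n).map fun i => F (i + 1)))
      (appList (F k) ((List.range n).map fun j =>
        appList (Phi n (j + 1)) ((List.range n).map fun i => F (i + 1)))) := by
  have hlhs := (Phi_reduces F hk hkn).trans (WOf_reduces F n k)
  have hrhs : Reduces (appList (F k) (args (fun j => appList (Phi n j) (args F n)) n))
      (appList (F k) (args (fun j => appList (WOf F n j) (args (WOf F n) n)) n)) := by
    refine Reduces.appList .refl (List.forall₂_map_left_iff.2 (List.forall₂_map_right_iff.2 ?_))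
    exact List.forall₂_same.2 fun j hj => Phi_reduces F (by omega) (by simpa using hj)
  exact BetaEta.of_common_reduct hlhs hrhs

/-- for n ≥ 1, 1 ≤ k ≤ n and all terms F_1,…,F_n,
(Φ_k^n F_1 ⋯ F_n) =βη (F_k (Φ_1^n F_1 ⋯ F_n) ⋯ (Φ_n^n F_1 ⋯ F_n)). -/
theorem curry_multiple_fixed_points (n k : ℕ) (hn : 1 ≤ n) (hk : 1 ≤ k)
    (hkn : k ≤ n) (F : ℕ → Tm) :
    BetaEta (appList (Phi n k) ((List.range n).map fun i => F (i + 1)))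
      (appList (F k) ((List.range n).map fun j =>
        appList (Phi n (j + 1)) ((List.range n).map fun i => F (i + 1)))) :=
  curry_multiple_fixed_points_general n k hk hkn F

end Tm
end LC
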